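/- arXiv:2412.09556 — 9 statements merged into one kernel-verified Lean document; each statement's English description precedes it below -/
import Mathlib

section
/- (Nonconvex Jensen inequality.) Let u : ℝ^d → ℝ be differentiable with L-Lipschitz gradient, let w_1,…,w_m be nonnegative reals with ∑_{i=1}^m w_i = 1, and let x_1,…,x_m ∈ ℝ^d. Then u(∑_{i=1}^m w_i x_i) ≤ ∑_{i=1}^m w_i u(x_i) + (L/2)·∑_{i=1}^m ∑_{j=1}^m w_i w_j ‖x_j − x_i‖². -/
/-!
Descent lemma: if `Df` is `L`-Lipschitz, then `t ↦ f (a + t v) - t Df(a) v + (L/2) t² ‖v‖²` has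
nonnegative derivative for `t > 0`, hence `f b ≥ f a + Df(a) (b - a) - (L/2) ‖b - a‖²`.
Applying this at the barycentre `c = ∑ wᵢ xᵢ` and averaging with the weights `wᵢ` cancels the
first-order terms, so `f c ≤ ∑ wᵢ f xᵢ + (L/2) ∑ wᵢ ‖xᵢ - c‖²`. By the parallel-axis identity
`∑ᵢ ∑ⱼ wᵢ wⱼ ‖xⱼ - xᵢ‖² = 2 ∑ wᵢ ‖xᵢ - c‖²`, this is stronger than the claim.
-/

open Finset

theorem sum_smul_sub_sum_smul_eq_zero {E : Type*} [AddCommGroup E] [Module ℝ E] {ι : Type*}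
    (s : Finset ι) {w : ι → ℝ} (hw1 : ∑ i ∈ s, w i = 1) (x : ι → E) :
    ∑ i ∈ s, w i • (x i - ∑ j ∈ s, w j • x j) = 0 := by
  simp only [smul_sub, sum_sub_distrib, ← sum_smul, hw1, one_smul, sub_self]

section LipschitzFDeriv

variable {E : Type*} [NormedAddCommGroup E] [NormedSpace ℝ E] {f : E → ℝ} {L : ℝ}

theorem sub_half_mul_norm_sq_le_of_norm_fderiv_sub_le (hf : Differentiable ℝ f)
    (hlip : ∀ a b, ‖fderiv ℝ f a - fderiv ℝ f b‖ ≤ L * ‖a - b‖) (a b : E) :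
    f a + fderiv ℝ f a (b - a) - L / 2 * ‖b - a‖ ^ 2 ≤ f b := by
  set v := b - a
  let g : ℝ → ℝ := fun t ↦ f (a + t • v) - t * fderiv ℝ f a v + L / 2 * t ^ 2 * ‖v‖ ^ 2
  let g' : ℝ → ℝ := fun t ↦ fderiv ℝ f (a + t • v) v - fderiv ℝ f a v + L * t * ‖v‖ ^ 2
  have hline : ∀ t : ℝ, HasDerivAt (fun t : ℝ ↦ a + t • v) v t := fun t ↦ by
    simpa using ((hasDerivAt_id t).smul_const v).const_add a
  have hg : ∀ t, HasDerivAt g (g' t) t := fun t ↦ by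
    refine ((((hf _).hasFDerivAt.comp_hasDerivAt t (hline t)).sub
      ((hasDerivAt_id t).mul_const (fderiv ℝ f a v))).add
      (((hasDerivAt_pow 2 t).const_mul (L / 2)).mul_const (‖v‖ ^ 2))).congr_deriv ?_
    simp only [g']; ring
  have hg'_nonneg : ∀ t ∈ interior (Set.Ici (0 : ℝ)), 0 ≤ g' t := by
    intro t ht
    rw [interior_Ici, Set.mem_Ioi] at ht
    have hbound : |(fderiv ℝ f (a + t • v) - fderiv ℝ f a) v| ≤ L * t * ‖v‖ ^ 2 :=
      calc |(fderiv ℝ f (a + t • v) - fderiv ℝ f a) v|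
          ≤ ‖fderiv ℝ f (a + t • v) - fderiv ℝ f a‖ * ‖v‖ := by
            simpa using (fderiv ℝ f (a + t • v) - fderiv ℝ f a).le_opNorm v
        _ ≤ L * ‖t • v‖ * ‖v‖ := by
            gcongr; simpa using hlip (a + t • v) a
        _ = L * t * ‖v‖ ^ 2 := by rw [norm_smul, Real.norm_of_nonneg ht.le]; ring
    have hlower := neg_le_of_abs_le hbound
    rw [sub_apply] at hlower
    linarith
  have hmono : MonotoneOn g (Set.Ici 0) :=
    monotoneOn_of_hasDerivWithinAt_nonneg (convex_Ici 0)
      (fun t _ ↦ (hg t).continuousAt.continuousWithinAt) (fun t _ ↦ (hg t).hasDerivWithinAt)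
      hg'_nonneg
  have hg01 := hmono Set.self_mem_Ici (Set.mem_Ici.2 zero_le_one) zero_le_one
  simp only [g, v, zero_smul, add_zero, zero_mul, sub_zero, one_smul, add_sub_cancel] at hg01
  linarith

theorem apply_sum_smul_le_of_norm_fderiv_sub_le (hf : Differentiable ℝ f)
    (hlip : ∀ a b, ‖fderiv ℝ f a - fderiv ℝ f b‖ ≤ L * ‖a - b‖) {ι : Type*} (s : Finset ι)
    {w : ι → ℝ} (hw : ∀ i ∈ s, 0 ≤ w i) (hw1 : ∑ i ∈ s, w i = 1) (x : ι → E) :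
    f (∑ i ∈ s, w i • x i) ≤
      ∑ i ∈ s, w i * f (x i) + L / 2 * ∑ i ∈ s, w i * ‖x i - ∑ j ∈ s, w j • x j‖ ^ 2 := by
  set c := ∑ j ∈ s, w j • x j
  have hlin : ∑ i ∈ s, w i * fderiv ℝ f c (x i - c) = 0 := by
    simp only [← smul_eq_mul, ← map_smul, ← map_sum]
    rw [sum_smul_sub_sum_smul_eq_zero s hw1, map_zero]
  have hexpand : ∑ i ∈ s, w i * (f c + fderiv ℝ f c (x i - c) - L / 2 * ‖x i - c‖ ^ 2) =
      f c - L / 2 * ∑ i ∈ s, w i * ‖x i - c‖ ^ 2 := by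
    simp only [mul_sub, mul_add, sum_sub_distrib, sum_add_distrib, ← sum_mul, hw1, one_mul, hlin,
      add_zero, mul_sum, mul_left_comm (w _)]
  have hdescent : ∑ i ∈ s, w i * (f c + fderiv ℝ f c (x i - c) - L / 2 * ‖x i - c‖ ^ 2) ≤
      ∑ i ∈ s, w i * f (x i) := sum_le_sum fun i hi ↦ mul_le_mul_of_nonneg_left
    (sub_half_mul_norm_sq_le_of_norm_fderiv_sub_le hf hlip c (x i)) (hw i hi)
  linarith

end LipschitzFDeriv

section InnerProductSpace

variable {F : Type*} [NormedAddCommGroup F] [InnerProductSpace ℝ F]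

theorem norm_fderiv_sub_fderiv_eq_norm_gradient_sub_gradient [CompleteSpace F] (f : F → ℝ)
    (a b : F) : ‖fderiv ℝ f a - fderiv ℝ f b‖ = ‖gradient f a - gradient f b‖ := by
  rw [gradient, gradient, ← map_sub, LinearIsometryEquiv.norm_map]

theorem sum_mul_norm_sub_sq_eq_add_norm_sub_sq {ι : Type*} (s : Finset ι) {w : ι → ℝ}
    (hw1 : ∑ i ∈ s, w i = 1) (x : ι → F) (y : F) :
    ∑ i ∈ s, w i * ‖x i - y‖ ^ 2 =
      ∑ i ∈ s, w i * ‖x i - ∑ j ∈ s, w j • x j‖ ^ 2 + ‖∑ j ∈ s, w j • x j - y‖ ^ 2 := by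
  set c := ∑ j ∈ s, w j • x j
  have hcross : ∑ i ∈ s, w i * inner ℝ (x i - c) (c - y) = 0 := by
    simp only [← real_inner_smul_left, ← sum_inner]
    rw [sum_smul_sub_sum_smul_eq_zero s hw1, inner_zero_left]
  have hsplit : ∀ i, ‖x i - y‖ ^ 2 = ‖x i - c‖ ^ 2 + 2 * inner ℝ (x i - c) (c - y) + ‖c - y‖ ^ 2 :=
    fun i ↦ by rw [← norm_add_sq_real, sub_add_sub_cancel]
  simp only [hsplit, mul_add, sum_add_distrib, ← sum_mul, hw1, one_mul, mul_left_comm (w _) 2,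
    ← mul_sum, hcross, mul_zero, add_zero]

theorem sum_sum_mul_mul_norm_sub_sq_eq {ι : Type*} (s : Finset ι) {w : ι → ℝ}
    (hw1 : ∑ i ∈ s, w i = 1) (x : ι → F) :
    ∑ i ∈ s, ∑ j ∈ s, w i * w j * ‖x j - x i‖ ^ 2 =
      2 * ∑ i ∈ s, w i * ‖x i - ∑ j ∈ s, w j • x j‖ ^ 2 := by
  calc ∑ i ∈ s, ∑ j ∈ s, w i * w j * ‖x j - x i‖ ^ 2
      = ∑ i ∈ s, w i * ∑ j ∈ s, w j * ‖x j - x i‖ ^ 2 := by simp only [mul_assoc, mul_sum]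
    _ = ∑ i ∈ s, w i * (∑ j ∈ s, w j * ‖x j - ∑ k ∈ s, w k • x k‖ ^ 2 +
          ‖x i - ∑ k ∈ s, w k • x k‖ ^ 2) := sum_congr rfl fun i _ ↦ by
        rw [sum_mul_norm_sub_sq_eq_add_norm_sub_sq s hw1 x (x i), norm_sub_rev _ (x i)]
    _ = 2 * ∑ i ∈ s, w i * ‖x i - ∑ j ∈ s, w j • x j‖ ^ 2 := by
        simp only [mul_add, sum_add_distrib, ← sum_mul, hw1, one_mul]; ring

end InnerProductSpace

/-- Nonconvex Jensen inequality: if `u : ℝ^d → ℝ` is differentiable with `L`-Lipschitz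
gradient, `w i ≥ 0` sum to one, then
`u(∑ i, w i • x i) ≤ ∑ i, w i * u (x i) + (L/2) ∑ i ∑ j, w i w j ‖x j − x i‖²`. -/
theorem stmt6 (d m : ℕ) (u : EuclideanSpace ℝ (Fin d) → ℝ) (L : ℝ)
    (hdiff : Differentiable ℝ u)
    (hlip : ∀ a b : EuclideanSpace ℝ (Fin d), ‖gradient u a - gradient u b‖ ≤ L * ‖a - b‖)
    (w : Fin m → ℝ) (hw : ∀ i, 0 ≤ w i) (hw1 : ∑ i, w i = 1)
    (x : Fin m → EuclideanSpace ℝ (Fin d)) :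
    u (∑ i, w i • x i) ≤
      ∑ i, w i * u (x i) + (L / 2) * ∑ i, ∑ j, w i * w j * ‖x j - x i‖ ^ 2 := by
  set c := ∑ i, w i • x i
  have hlip' : ∀ a b, ‖fderiv ℝ u a - fderiv ℝ u b‖ ≤ L * ‖a - b‖ := fun a b ↦ by
    rw [norm_fderiv_sub_fderiv_eq_norm_gradient_sub_gradient]; exact hlip a b
  -- `L` is not assumed nonnegative, but `0 ≤ L ‖a - b‖` follows from `hlip`.
  have hspread : 0 ≤ L / 2 * ∑ i, w i * ‖x i - c‖ ^ 2 := by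
    rw [mul_sum]
    refine sum_nonneg fun i _ ↦ ?_
    have hL := mul_nonneg ((norm_nonneg _).trans (hlip (x i) c)) (norm_nonneg (x i - c))
    nlinarith [hw i]
  rw [sum_sum_mul_mul_norm_sub_sq_eq univ hw1]
  have hjensen := apply_sum_smul_le_of_norm_fderiv_sub_le hdiff hlip' univ (fun i _ ↦ hw i) hw1 x
  linarith
end

section
/- Let θ ∈ (1/2, 1), c > 0, ν₀ ∈ ℕ, and let (S_ν)_{ν∈ℕ} be a sequence of nonnegative reals satisfying (S_{ν+1})^{θ/(1−θ)} ≤ c·(S_ν − S_{ν+1}) for all ν ≥ ν₀. Then there exists c' > 0 such that S_ν ≤ c'·ν^{−(1−θ)/(2θ−1)} for all integers ν ≥ max(ν₀, 1). -/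
/-!
Put `α = θ/(1-θ) > 1` and `p = 1 - α < 0`. The recursion makes `S` nonincreasing from `ν₀` on, and
forces `S ν ^ p` to grow by a fixed amount `μ > 0` at each step: if `S (ν+1) ≥ S ν / 2`, the
tangent-line bound for the convex function `t ↦ t ^ p` together with the recursion gives the gain;
if `S (ν+1) < S ν / 2`, then `S (ν+1) ^ p ≥ 2 ^ (-p) * S ν ^ p` and `S ν ^ p ≥ S ν₀ ^ p` bounds the
gain from below. Hence `S ν ^ p ≳ ν`, i.e. `S ν ≲ ν ^ (1/p)`, and `1/p = -(1-θ)/(2θ-1)`.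
-/

open Real

namespace Real

lemma one_add_mul_sub_one_le_rpow_of_nonpos {x p : ℝ} (hx : 0 < x) (hp : p ≤ 0) :
    1 + p * (x - 1) ≤ x ^ p := by
  rw [rpow_def_of_pos hx, mul_comm (log x) p]
  have hlog : p * (x - 1) ≤ p * log x := mul_le_mul_of_nonpos_left (log_le_sub_one_of_pos hx) hp
  linarith [add_one_le_exp (p * log x)]

lemma rpow_add_mul_rpow_sub_one_mul_sub_le_rpow_of_nonpos {x y p : ℝ} (hx : 0 < x) (hy : 0 < y)
    (hp : p ≤ 0) : y ^ p + p * y ^ (p - 1) * (x - y) ≤ x ^ p := by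
  have hbern := one_add_mul_sub_one_le_rpow_of_nonpos (div_pos hx hy) hp
  have hyp : 0 < y ^ p := rpow_pos_of_pos hy p
  calc y ^ p + p * y ^ (p - 1) * (x - y) = y ^ p * (1 + p * (x / y - 1)) := by
        rw [rpow_sub_one hy.ne']; field_simp
    _ ≤ y ^ p * (x / y) ^ p := mul_le_mul_of_nonneg_left hbern hyp.le
    _ = x ^ p := by rw [div_rpow hx.le hy.le]; field_simp

end Real

section OneStep

variable {α c a b : ℝ}

lemma rpow_one_sub_add_le_of_le_two_mul (hα : 1 ≤ α) (hc : 0 < c) (ha : 0 < a) (hba : b ≤ 2 * a)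
    (hrec : a ^ α ≤ c * (b - a)) : b ^ (1 - α) + (α - 1) * 2 ^ (-α) / c ≤ a ^ (1 - α) := by
  have hb : 0 < b := by nlinarith [rpow_pos_of_pos ha α]
  have htangent := rpow_add_mul_rpow_sub_one_mul_sub_le_rpow_of_nonpos ha hb
    (show 1 - α ≤ 0 by linarith)
  rw [show 1 - α - 1 = -α by ring] at htangent
  have hhalf : 2 ^ (-α) * b ^ α ≤ a ^ α := by
    rw [rpow_neg zero_le_two, ← div_eq_inv_mul, ← div_rpow hb.le zero_le_two]
    exact rpow_le_rpow (by positivity) (by linarith) (by linarith)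
  have hbα : b ^ (-α) * b ^ α = 1 := by rw [← rpow_add hb]; simp
  have hgain : 2 ^ (-α) / c ≤ b ^ (-α) * (b - a) := by
    rw [div_le_iff₀ hc]
    calc 2 ^ (-α) = b ^ (-α) * (2 ^ (-α) * b ^ α) := by rw [mul_left_comm, hbα, mul_one]
      _ ≤ b ^ (-α) * (c * (b - a)) :=
          mul_le_mul_of_nonneg_left (hhalf.trans hrec) (rpow_nonneg hb.le _)
      _ = b ^ (-α) * (b - a) * c := by ring
  have := mul_le_mul_of_nonneg_left hgain (show 0 ≤ α - 1 by linarith)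
  rw [mul_div_assoc]
  linarith

lemma rpow_one_sub_add_le_of_two_mul_le {M : ℝ} (hα : 1 ≤ α) (ha : 0 < a) (hab : 2 * a ≤ b)
    (hbM : b ≤ M) : b ^ (1 - α) + (2 ^ (α - 1) - 1) * M ^ (1 - α) ≤ a ^ (1 - α) := by
  have hb : 0 < b := by linarith
  have hp : 1 - α ≤ 0 := by linarith
  have hM : M ^ (1 - α) ≤ b ^ (1 - α) := rpow_le_rpow_of_nonpos hb hbM hp
  have h2 : 1 ≤ (2 : ℝ) ^ (α - 1) := one_le_rpow one_le_two (by linarith)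
  have hhalf : (b / 2) ^ (1 - α) ≤ a ^ (1 - α) :=
    rpow_le_rpow_of_nonpos ha (by linarith) hp
  rw [div_rpow hb.le zero_le_two, div_eq_mul_inv, ← rpow_neg zero_le_two, neg_sub] at hhalf
  nlinarith

lemma exists_pos_rpow_one_sub_add_le {M : ℝ} (hα : 1 < α) (hc : 0 < c) (hM : 0 < M) :
    ∃ μ > 0, ∀ a b, 0 < a → b ≤ M → a ^ α ≤ c * (b - a) → b ^ (1 - α) + μ ≤ a ^ (1 - α) := by
  have h2 : 1 < (2 : ℝ) ^ (α - 1) := one_lt_rpow one_lt_two (by linarith)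
  refine ⟨min ((α - 1) * 2 ^ (-α) / c) ((2 ^ (α - 1) - 1) * M ^ (1 - α)), ?_, ?_⟩
  · apply lt_min <;> apply_rules [div_pos, mul_pos, rpow_pos_of_pos, two_pos] <;> linarith
  intro a b ha hbM hrec
  rcases le_total b (2 * a) with hba | hab
  · linarith [min_le_left ((α - 1) * 2 ^ (-α) / c) ((2 ^ (α - 1) - 1) * M ^ (1 - α)),
      rpow_one_sub_add_le_of_le_two_mul hα.le hc ha hba hrec]
  · linarith [min_le_right ((α - 1) * 2 ^ (-α) / c) ((2 ^ (α - 1) - 1) * M ^ (1 - α)),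
      rpow_one_sub_add_le_of_two_mul_le hα.le ha hab hbM]

end OneStep

lemma mul_sub_add_one_le_rpow_of_add_le {S : ℕ → ℝ} {ν₀ : ℕ} {p μ M : ℝ} (hp : p ≤ 0)
    (hanti : ∀ ν ≥ ν₀, S (ν + 1) ≤ S ν) (hM : S ν₀ ≤ M) (hμM : μ ≤ M ^ p)
    (hstep : ∀ ν ≥ ν₀, 0 < S (ν + 1) → S ν ^ p + μ ≤ S (ν + 1) ^ p) :
    ∀ ν ≥ ν₀, 0 < S ν → μ * ((ν : ℝ) - ν₀ + 1) ≤ S ν ^ p := by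
  intro ν hν
  induction ν, hν using Nat.le_induction with
  | base => intro h0; simpa using hμM.trans (rpow_le_rpow_of_nonpos h0 hM hp)
  | succ n hn ih =>
    intro hpos
    have := ih (hpos.trans_le (hanti n hn))
    have := hstep n hn hpos
    push_cast
    linarith

theorem exists_le_mul_rpow_of_rpow_succ_le_mul_sub {α c : ℝ} (hα : 1 < α) (hc : 0 < c) {ν₀ : ℕ}
    {S : ℕ → ℝ} (hS : ∀ ν, 0 ≤ S ν)
    (hrec : ∀ ν ≥ ν₀, S (ν + 1) ^ α ≤ c * (S ν - S (ν + 1))) :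
    ∃ c' > 0, ∀ ν ≥ max ν₀ 1, S ν ≤ c' * (ν : ℝ) ^ (1 - α)⁻¹ := by
  have hp : 1 - α < 0 := by linarith
  have hanti : ∀ ν ≥ ν₀, S (ν + 1) ≤ S ν := fun ν hν => by
    nlinarith [hrec ν hν, rpow_nonneg (hS (ν + 1)) α]
  have hbound : ∀ ν ≥ ν₀, S ν ≤ S ν₀ + 1 := fun ν hν => by
    linarith [antitoneOn_nat_Ici_of_succ_le hanti (le_refl ν₀) hν hν]
  have hM : 0 < S ν₀ + 1 := by linarith [hS ν₀]
  obtain ⟨μ, hμ, hstep⟩ := exists_pos_rpow_one_sub_add_le hα hc hM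
  set μ' := min μ ((S ν₀ + 1) ^ (1 - α))
  have hμ' : 0 < μ' := lt_min hμ (rpow_pos_of_pos hM _)
  have hstep' : ∀ ν ≥ ν₀, 0 < S (ν + 1) → S ν ^ (1 - α) + μ' ≤ S (ν + 1) ^ (1 - α) :=
    fun ν hν hpos => (add_le_add_right (min_le_left _ _) _).trans
      (hstep _ _ hpos (hbound ν hν) (hrec ν hν))
  have hgrowth := mul_sub_add_one_le_rpow_of_add_le hp.le hanti (le_add_of_nonneg_right zero_le_one)
    (min_le_right _ _) hstep'
  refine ⟨(μ' / (ν₀ + 1)) ^ (1 - α)⁻¹, rpow_pos_of_pos (by positivity) _, fun ν hν => ?_⟩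
  have hν₀ : ν₀ ≤ ν := le_of_max_le_left hν
  have hν1 : (1 : ℝ) ≤ ν := by exact_mod_cast le_of_max_le_right hν
  rcases (hS ν).eq_or_lt with h0 | hpos
  · rw [← h0]; positivity
  have hνν₀ : (ν₀ : ℝ) ≤ ν := by exact_mod_cast hν₀
  calc S ν ≤ (μ' * ((ν : ℝ) - ν₀ + 1)) ^ (1 - α)⁻¹ :=
        (le_rpow_inv_iff_of_neg hpos (by nlinarith) hp).2 (hgrowth ν hν₀ hpos)
    _ ≤ (μ' / (ν₀ + 1) * ν) ^ (1 - α)⁻¹ := by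
        refine rpow_le_rpow_of_nonpos (by positivity) ?_ (inv_nonpos.2 hp.le)
        have hν : (ν : ℝ) ≤ ((ν : ℝ) - ν₀ + 1) * (ν₀ + 1) := by
          nlinarith [mul_nonneg (Nat.cast_nonneg (α := ℝ) ν₀) (sub_nonneg.2 hνν₀)]
        rw [div_mul_eq_mul_div, div_le_iff₀ (by positivity), mul_assoc]
        exact mul_le_mul_of_nonneg_left hν hμ'.le
    _ = (μ' / (ν₀ + 1)) ^ (1 - α)⁻¹ * (ν : ℝ) ^ (1 - α)⁻¹ := mul_rpow (by positivity) (by linarith)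

/-- Sublinear-rate lemma: if `θ ∈ (1/2,1)`, `c > 0`, and a nonnegative sequence `S`
satisfies `(S (ν+1))^{θ/(1−θ)} ≤ c (S ν − S (ν+1))` for all `ν ≥ ν₀`, then there is
`c' > 0` with `S ν ≤ c' ν^{−(1−θ)/(2θ−1)}` for all `ν ≥ max ν₀ 1`. -/
theorem stmt8 (θ c : ℝ) (hθ0 : 1 / 2 < θ) (hθ1 : θ < 1) (hc : 0 < c) (ν₀ : ℕ)
    (S : ℕ → ℝ) (hS : ∀ ν, 0 ≤ S ν)
    (hrec : ∀ ν ≥ ν₀, (S (ν + 1)) ^ (θ / (1 - θ)) ≤ c * (S ν - S (ν + 1))) :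
    ∃ c' > 0, ∀ ν ≥ max ν₀ 1, S ν ≤ c' * (ν : ℝ) ^ (-(1 - θ) / (2 * θ - 1)) := by
  have h1θ : 0 < 1 - θ := by linarith
  have hα : 1 < θ / (1 - θ) := (one_lt_div h1θ).2 (by linarith)
  have hexp : -(1 - θ) / (2 * θ - 1) = (1 - θ / (1 - θ))⁻¹ := by
    rw [one_sub_div h1θ.ne', inv_div, neg_div, ← div_neg, neg_sub]
    ring_nf
  rw [hexp]
  exact exists_le_mul_rpow_of_rpow_succ_le_mul_sub hα hc hS hrec
end

section
/- (Key inequality behind the KL exponent of separable sums.) Let m ≥ 1, θ ∈ (0,1), κ > 0, and let a_1,…,a_m and b_1,…,b_m be nonnegative reals such that b_i ≥ κ·a_i^θ for every i = 1,…,m. Then (∑_{i=1}^m b_i²)^{1/2} ≥ (κ / max{m^{θ−1/2}, 1})·(∑_{i=1}^m a_i)^θ. -/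
/-!
Since `0 ≤ κ a_i^θ ≤ b_i`, the Euclidean norm of `b` is at least `κ (∑ a_i^{2θ})^{1/2}`.
With `p = 2θ`, `(∑ a_i)^p ≤ max (m^{p-1}) 1 · ∑ a_i^p`: for `p ≤ 1` because `x ↦ x^p` is
subadditive, for `p ≥ 1` by convexity (power mean inequality). Taking square roots gives the
factor `max (m^{θ-1/2}) 1`.
-/

open Finset

namespace Real

variable {ι : Type*} {s : Finset ι} {f : ι → ℝ}

theorem rpow_sum_le_sum_rpow_of_nonneg {p : ℝ} (hp0 : 0 < p) (hp1 : p ≤ 1)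
    (hf : ∀ i ∈ s, 0 ≤ f i) : (∑ i ∈ s, f i) ^ p ≤ ∑ i ∈ s, f i ^ p :=
  le_sum_of_subadditive_on_pred (· ^ p) (0 ≤ ·) (by simp [zero_rpow hp0.ne'])
    (fun _ _ hx hy => rpow_add_le_add_rpow hx hy hp0.le hp1) (fun _ _ => add_nonneg) f hf

theorem rpow_sum_le_max_mul_sum_rpow_of_nonneg {p : ℝ} (hp : 0 < p) (hf : ∀ i ∈ s, 0 ≤ f i) :
    (∑ i ∈ s, f i) ^ p ≤ max ((#s : ℝ) ^ (p - 1)) 1 * ∑ i ∈ s, f i ^ p := by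
  have hsum : 0 ≤ ∑ i ∈ s, f i ^ p := sum_nonneg fun i hi => rpow_nonneg (hf i hi) p
  rcases le_total p 1 with hp1 | hp1
  · exact (rpow_sum_le_sum_rpow_of_nonneg hp hp1 hf).trans
      (le_mul_of_one_le_left hsum (le_max_right _ _))
  · exact (rpow_sum_le_const_mul_sum_rpow_of_nonneg s hp1 hf).trans
      (mul_le_mul_of_nonneg_right (le_max_left _ _) hsum)

theorem sqrt_rpow_mul_two {x : ℝ} (hx : 0 ≤ x) (q : ℝ) : √(x ^ (q * 2)) = x ^ q := by
  rw [rpow_mul hx, rpow_two, sqrt_sq (rpow_nonneg hx q)]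

theorem rpow_sum_le_max_mul_sqrt_sum_sq_rpow {θ : ℝ} (hθ : 0 < θ) (hf : ∀ i ∈ s, 0 ≤ f i) :
    (∑ i ∈ s, f i) ^ θ ≤ max ((#s : ℝ) ^ (θ - 1 / 2)) 1 * √(∑ i ∈ s, (f i ^ θ) ^ 2) := by
  have hsq : ∑ i ∈ s, (f i ^ θ) ^ 2 = ∑ i ∈ s, f i ^ (θ * 2) :=
    sum_congr rfl fun i hi => by rw [rpow_mul (hf i hi), rpow_two]
  have hmax : √(max ((#s : ℝ) ^ (θ * 2 - 1)) 1) = max ((#s : ℝ) ^ (θ - 1 / 2)) 1 := by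
    rw [sqrt_monotone.map_max, sqrt_one, show θ * 2 - 1 = (θ - 1 / 2) * 2 by ring,
      sqrt_rpow_mul_two (Nat.cast_nonneg _)]
  calc (∑ i ∈ s, f i) ^ θ = √((∑ i ∈ s, f i) ^ (θ * 2)) :=
        (sqrt_rpow_mul_two (sum_nonneg hf) θ).symm
    _ ≤ √(max ((#s : ℝ) ^ (θ * 2 - 1)) 1 * ∑ i ∈ s, f i ^ (θ * 2)) :=
        sqrt_le_sqrt (rpow_sum_le_max_mul_sum_rpow_of_nonneg (by positivity) hf)
    _ = max ((#s : ℝ) ^ (θ - 1 / 2)) 1 * √(∑ i ∈ s, (f i ^ θ) ^ 2) := by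
        rw [sqrt_mul (by positivity), hmax, hsq]

end Real

theorem stmt10_general (m : ℕ) (θ κ : ℝ) (hθ0 : 0 < θ) (hκ : 0 < κ)
    (a b : Fin m → ℝ) (ha : ∀ i, 0 ≤ a i)
    (h : ∀ i, κ * (a i) ^ θ ≤ b i) :
    (κ / max ((m : ℝ) ^ (θ - 1 / 2)) 1) * (∑ i, a i) ^ θ ≤
      Real.sqrt (∑ i, (b i) ^ 2) := by
  set M := max ((m : ℝ) ^ (θ - 1 / 2)) 1
  have hM : 0 < M := lt_max_of_lt_right one_pos
  have hpow : (∑ i, a i) ^ θ ≤ M * √(∑ i, (a i ^ θ) ^ 2) := by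
    simpa only [card_univ, Fintype.card_fin] using
      Real.rpow_sum_le_max_mul_sqrt_sum_sq_rpow hθ0 (s := univ) fun i _ => ha i
  calc κ / M * (∑ i, a i) ^ θ ≤ κ / M * (M * √(∑ i, (a i ^ θ) ^ 2)) := by gcongr
    _ = √(∑ i, (κ * a i ^ θ) ^ 2) := by
      simp_rw [mul_pow, ← mul_sum, Real.sqrt_mul (sq_nonneg κ), Real.sqrt_sq hκ.le]
      field_simp
    _ ≤ √(∑ i, b i ^ 2) := Real.sqrt_le_sqrt <| sum_le_sum fun i _ =>
      pow_le_pow_left₀ (by have := ha i; positivity) (h i) 2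

/-- Key inequality behind the KL exponent of separable sums: if `b i ≥ κ (a i)^θ` for
nonnegative `a i, b i` and `θ ∈ (0,1)`, `κ > 0`, then
`√(∑ i, (b i)²) ≥ (κ / max (m^{θ−1/2}) 1) (∑ i, a i)^θ`. -/
theorem stmt10 (m : ℕ) (hm : 1 ≤ m) (θ κ : ℝ) (hθ0 : 0 < θ) (hθ1 : θ < 1) (hκ : 0 < κ)
    (a b : Fin m → ℝ) (ha : ∀ i, 0 ≤ a i) (hb : ∀ i, 0 ≤ b i)
    (h : ∀ i, κ * (a i) ^ θ ≤ b i) :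
    (κ / max ((m : ℝ) ^ (θ - 1 / 2)) 1) * (∑ i, a i) ^ θ ≤
      Real.sqrt (∑ i, (b i) ^ 2) :=
  stmt10_general m θ κ hθ0 hκ a b ha h
end

section
/- (Consensus contraction.) Let m, d ≥ 1, let W be an m×m real doubly stochastic matrix (all row sums and all column sums equal 1), let J := (1/m)𝟙𝟙ᵀ be the m×m averaging matrix, and let X be any m×d real matrix. Then (I − J)·W·X = (W − J)·(I − J)·X, and consequently ‖(I − J)·W·X‖_F ≤ ‖W − J‖₂ · ‖(I − J)·X‖_F, where ‖·‖_F denotes the Frobenius norm and ‖·‖₂ the ℓ₂ operator (spectral) norm of a matrix. -/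
open Finset Matrix

/-- Consensus contraction: for a doubly stochastic `W`, with `J = (1/m)𝟙𝟙ᵀ`,
`(I − J) W X = (W − J)(I − J) X`, and hence the Frobenius norm of `(I − J) W X` is at
most `‖W − J‖₂` times the Frobenius norm of `(I − J) X`. -/
theorem stmt11 (m d : ℕ) (hm : 1 ≤ m) (hd : 1 ≤ d)
    (W : Matrix (Fin m) (Fin m) ℝ)
    (hWrow : ∀ i, ∑ j, W i j = 1) (hWcol : ∀ j, ∑ i, W i j = 1)
    (J : Matrix (Fin m) (Fin m) ℝ) (hJ : J = (m : ℝ)⁻¹ • Matrix.of fun _ _ => (1 : ℝ))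
    (X : Matrix (Fin m) (Fin d) ℝ) :
    (1 - J) * W * X = (W - J) * ((1 - J) * X) ∧
    Real.sqrt (∑ i : Fin m, ∑ j : Fin d, (((1 - J) * W * X : Matrix (Fin m) (Fin d) ℝ) i j) ^ 2) ≤
      ‖Matrix.toEuclideanCLM (𝕜 := ℝ) (W - J)‖ *
        Real.sqrt (∑ i : Fin m, ∑ j : Fin d, (((1 - J) * X : Matrix (Fin m) (Fin d) ℝ) i j) ^ 2) := by
  have hm0 : (m : ℝ) ≠ 0 := Nat.cast_ne_zero.mpr (by omega)
  have hJW : J * W = J := by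
    ext i j
    simp [hJ, mul_apply, ← Finset.mul_sum, hWcol]
  have hWJ : W * J = J := by
    ext i j
    simp [hJ, mul_apply, ← Finset.sum_mul, hWrow]
  have hJ2 : J * J = J := by
    ext i j
    simp [hJ, mul_apply, Finset.sum_const, Finset.card_univ]
    field_simp
  have h1 : (1 - J) * W = W - J := by
    rw [sub_mul, one_mul, hJW]
  have h2 : (W - J) * (1 - J) = W - J := by
    rw [sub_mul, mul_sub, mul_sub, mul_one, mul_one, hWJ, hJ2]
    abel
  have hEq : (1 - J) * W * X = (W - J) * ((1 - J) * X) := by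
    rw [h1, show (W - J) * ((1 - J) * X) = (W - J) * (1 - J) * X from (Matrix.mul_assoc _ _ _).symm, h2]
  refine ⟨hEq, ?_⟩
  rw [hEq]
  set A := W - J with hA
  set Y := (1 - J) * X with hY
  set T := Matrix.toEuclideanCLM (𝕜 := ℝ) A with hT
  set v : Fin d → EuclideanSpace ℝ (Fin m) :=
    fun j => (WithLp.equiv 2 (Fin m → ℝ)).symm (fun i => Y i j) with hv
  have hcolY : ∀ j, ∑ i, (Y i j) ^ 2 = ‖v j‖ ^ 2 := by
    intro j
    rw [EuclideanSpace.norm_eq, Real.sq_sqrt (by positivity)]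
    simp [hv, sq_abs]
  have hcolAY : ∀ j, ∑ i, ((A * Y) i j) ^ 2 = ‖T (v j)‖ ^ 2 := by
    intro j
    rw [hT, hv, WithLp.equiv_symm_apply, Matrix.toEuclideanCLM_toLp,
      EuclideanSpace.norm_eq, Real.sq_sqrt (by positivity)]
    apply Finset.sum_congr rfl
    intro i _
    simp [Real.norm_eq_abs, sq_abs, Matrix.mul_apply, Matrix.toLin'_apply,
      Matrix.mulVec, dotProduct]
  rw [Finset.sum_comm, Finset.sum_comm (f := fun i j => (Y i j) ^ 2)]
  have hle : ∑ j, ∑ i, ((A * Y) i j) ^ 2 ≤ ‖T‖ ^ 2 * ∑ j, ∑ i, (Y i j) ^ 2 := by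
    rw [Finset.mul_sum]
    apply Finset.sum_le_sum
    intro j _
    rw [hcolAY j, hcolY j, ← mul_pow]
    exact pow_le_pow_left₀ (norm_nonneg _) (T.le_opNorm (v j)) 2
  calc Real.sqrt (∑ j, ∑ i, ((A * Y) i j) ^ 2)
      ≤ Real.sqrt (‖T‖ ^ 2 * ∑ j, ∑ i, (Y i j) ^ 2) := Real.sqrt_le_sqrt hle
    _ = ‖T‖ * Real.sqrt (∑ j, ∑ i, (Y i j) ^ 2) := by
        rw [Real.sqrt_mul (by positivity), Real.sqrt_sq (norm_nonneg _)]
end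

section
/- (Inexact proximal-gradient descent.) Let E = ℝ^d with the Euclidean norm, let f : E → ℝ be differentiable with L-Lipschitz gradient, let r : E → ℝ be convex, and set u := f + r. Let α > 0, ξ > 0, and x, y ∈ E, and let x⁺ be a global minimizer over E of z ↦ r(z) + (1/(2α))‖z − (x − α y)‖². Then u(x⁺) ≤ u(x) − (1/α − L/2 − ξ/2)·‖x⁺ − x‖² + (1/(2ξ))·‖y − ∇f(x)‖². -/
/-!
Three inequalities add up. The descent lemma
`f x⁺ ≤ f x + ⟪∇f x, x⁺ - x⟫ + L/2 ‖x⁺ - x‖²` holds because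
`t ↦ f (x + t (x⁺ - x)) - t ⟪∇f x, x⁺ - x⟫ - L t²/2 ‖x⁺ - x‖²` has nonpositive derivative for `t ≥ 0`.
Optimality of the proximal point, tested against `x⁺ + t (x - x⁺)` with `t → 0⁺` and using
convexity of `r`, gives `r x⁺ ≤ r x - ‖x⁺ - x‖²/α - ⟪y, x⁺ - x⟫`. Finally Young's inequality bounds
the error term `⟪∇f x - y, x⁺ - x⟫ ≤ ξ/2 ‖x⁺ - x‖² + ‖y - ∇f x‖²/(2ξ)`.
-/

open Set Filter Topology
open scoped InnerProductSpace

section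

variable {F : Type*} [NormedAddCommGroup F] [InnerProductSpace ℝ F]

theorem HasGradientAt.hasDerivAt_comp_add_smul [CompleteSpace F] {f : F → ℝ} {g a v : F} {t : ℝ}
    (hf : HasGradientAt f g (a + t • v)) :
    HasDerivAt (fun s : ℝ => f (a + s • v)) ⟪g, v⟫_ℝ t := by
  have hline : HasDerivAt (fun s : ℝ => a + s • v) v t := by
    simpa using ((hasDerivAt_id t).smul_const v).const_add a
  exact (hasGradientAt_iff_hasFDerivAt.mp hf).comp_hasDerivAt t hline

theorem le_add_inner_gradient_add_sq_norm_of_lipschitz [CompleteSpace F] {f : F → ℝ} {L : ℝ}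
    (hdiff : Differentiable ℝ f)
    (hlip : ∀ a b : F, ‖gradient f a - gradient f b‖ ≤ L * ‖a - b‖) (a b : F) :
    f b ≤ f a + ⟪gradient f a, b - a⟫_ℝ + L / 2 * ‖b - a‖ ^ 2 := by
  set v := b - a
  set φ : ℝ → ℝ := fun t => f (a + t • v) - t * ⟪gradient f a, v⟫_ℝ - L / 2 * t ^ 2 * ‖v‖ ^ 2
  have hφ' (t : ℝ) : HasDerivAt φ
      (⟪gradient f (a + t • v), v⟫_ℝ - ⟪gradient f a, v⟫_ℝ - L * t * ‖v‖ ^ 2) t := by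
    have := ((((hdiff (a + t • v)).hasGradientAt).hasDerivAt_comp_add_smul).sub
      ((hasDerivAt_id t).mul_const ⟪gradient f a, v⟫_ℝ)).sub
      (((hasDerivAt_pow 2 t).const_mul (L / 2)).mul_const (‖v‖ ^ 2))
    exact this.congr_deriv (by norm_num only [one_mul]; ring)
  have hφ'_nonpos {t : ℝ} (ht : 0 ≤ t) :
      ⟪gradient f (a + t • v), v⟫_ℝ - ⟪gradient f a, v⟫_ℝ - L * t * ‖v‖ ^ 2 ≤ 0 := by
    refine sub_nonpos.mpr ?_
    calc ⟪gradient f (a + t • v), v⟫_ℝ - ⟪gradient f a, v⟫_ℝ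
        = ⟪gradient f (a + t • v) - gradient f a, v⟫_ℝ := (inner_sub_left _ _ _).symm
      _ ≤ ‖gradient f (a + t • v) - gradient f a‖ * ‖v‖ := real_inner_le_norm _ _
      _ ≤ L * ‖t • v‖ * ‖v‖ := by
          gcongr
          simpa using hlip (a + t • v) a
      _ = L * t * ‖v‖ ^ 2 := by rw [norm_smul, Real.norm_of_nonneg ht]; ring
  have hanti : AntitoneOn φ (Ici 0) := by
    refine antitoneOn_of_hasDerivWithinAt_nonpos (convex_Ici 0)
      (fun t _ => (hφ' t).continuousAt.continuousWithinAt)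
      (fun t _ => (hφ' t).hasDerivWithinAt) ?_
    rw [interior_Ici]
    exact fun t ht => hφ'_nonpos ht.le
  have h01 : φ 1 ≤ φ 0 := hanti (mem_Ici.mpr le_rfl) (mem_Ici.mpr zero_le_one) zero_le_one
  simp only [φ, v, one_smul, zero_smul, add_zero, add_sub_cancel] at h01
  linarith

theorem ConvexOn.le_add_inner_of_isMinOn_add_sq_norm_sub {r : F → ℝ} (hr : ConvexOn ℝ univ r)
    {c : ℝ} {p q : F} (hq : IsMinOn (fun z => r z + c * ‖z - p‖ ^ 2) univ q) (z : F) :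
    r q ≤ r z + 2 * c * ⟪q - p, z - q⟫_ℝ := by
  have hsegment : ∀ t ∈ Ioc (0 : ℝ) 1,
      r q ≤ r z + 2 * c * ⟪q - p, z - q⟫_ℝ + t * (c * ‖z - q‖ ^ 2) := by
    rintro t ⟨ht0, ht1⟩
    have hmin := isMinOn_iff.mp hq (q + t • (z - q)) (mem_univ _)
    have hconv : r (q + t • (z - q)) ≤ (1 - t) * r q + t * r z := by
      have := hr.2 (mem_univ q) (mem_univ z) (sub_nonneg.mpr ht1) ht0.le (by ring)
      rw [smul_eq_mul, smul_eq_mul] at this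
      rwa [show q + t • (z - q) = (1 - t) • q + t • z by module]
    have hexpand : ‖q + t • (z - q) - p‖ ^ 2
        = ‖q - p‖ ^ 2 + 2 * t * ⟪q - p, z - q⟫_ℝ + t ^ 2 * ‖z - q‖ ^ 2 := by
      rw [add_sub_right_comm, norm_add_sq_real, real_inner_smul_right, norm_smul,
        Real.norm_of_nonneg ht0.le]
      ring
    rw [hexpand] at hmin
    refine le_of_mul_le_mul_left ?_ ht0
    nlinarith
  have hlim : Tendsto (fun t : ℝ => r z + 2 * c * ⟪q - p, z - q⟫_ℝ + t * (c * ‖z - q‖ ^ 2))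
      (𝓝[>] 0) (𝓝 (r z + 2 * c * ⟪q - p, z - q⟫_ℝ)) := by
    have hcont :
        Continuous fun t : ℝ => r z + 2 * c * ⟪q - p, z - q⟫_ℝ + t * (c * ‖z - q‖ ^ 2) := by
      fun_prop
    simpa using (hcont.tendsto 0).mono_left nhdsWithin_le_nhds
  exact ge_of_tendsto hlim (eventually_of_mem (Ioc_mem_nhdsGT zero_lt_one) hsegment)

theorem real_inner_le_young {ξ : ℝ} (hξ : 0 < ξ) (u w : F) :
    ⟪u, w⟫_ℝ ≤ ξ / 2 * ‖w‖ ^ 2 + 1 / (2 * ξ) * ‖u‖ ^ 2 := by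
  have hsq : 0 ≤ ‖ξ • w - u‖ ^ 2 := sq_nonneg _
  rw [norm_sub_sq_real, norm_smul, real_inner_smul_left, real_inner_comm,
    Real.norm_of_nonneg hξ.le] at hsq
  calc ⟪u, w⟫_ℝ = 2 * ξ * ⟪u, w⟫_ℝ / (2 * ξ) := by field_simp
    _ ≤ (ξ ^ 2 * ‖w‖ ^ 2 + ‖u‖ ^ 2) / (2 * ξ) := by gcongr; linarith
    _ = ξ / 2 * ‖w‖ ^ 2 + 1 / (2 * ξ) * ‖u‖ ^ 2 := by field_simp

end

/-- Inexact proximal-gradient descent: with `f` differentiable with `L`-Lipschitz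
gradient, `r` convex, `u = f + r`, and `x⁺` a global minimizer of
`z ↦ r z + (1/(2α))‖z − (x − α y)‖²`, one has
`u(x⁺) ≤ u(x) − (1/α − L/2 − ξ/2)‖x⁺ − x‖² + (1/(2ξ))‖y − ∇f(x)‖²`. -/
theorem stmt12 (d : ℕ) (f : EuclideanSpace ℝ (Fin d) → ℝ) (L : ℝ)
    (hdiff : Differentiable ℝ f)
    (hlip : ∀ a b : EuclideanSpace ℝ (Fin d), ‖gradient f a - gradient f b‖ ≤ L * ‖a - b‖)
    (r : EuclideanSpace ℝ (Fin d) → ℝ) (hr : ConvexOn ℝ Set.univ r)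
    (α ξ : ℝ) (hα : 0 < α) (hξ : 0 < ξ)
    (x y xp : EuclideanSpace ℝ (Fin d))
    (hxp : IsMinOn (fun z => r z + (1 / (2 * α)) * ‖z - (x - α • y)‖ ^ 2) Set.univ xp) :
    f xp + r xp ≤ (f x + r x) - (1 / α - L / 2 - ξ / 2) * ‖xp - x‖ ^ 2
      + (1 / (2 * ξ)) * ‖y - gradient f x‖ ^ 2 := by
  have hf := le_add_inner_gradient_add_sq_norm_of_lipschitz hdiff hlip x xp
  have hprox := hr.le_add_inner_of_isMinOn_add_sq_norm_sub hxp x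
  have hyoung := real_inner_le_young hξ (gradient f x - y) (xp - x)
  have hprox_inner : 2 * (1 / (2 * α)) * ⟪xp - (x - α • y), x - xp⟫_ℝ
      = -(1 / α) * ‖xp - x‖ ^ 2 - ⟪y, xp - x⟫_ℝ := by
    rw [show xp - (x - α • y) = (xp - x) + α • y by module, show x - xp = -(xp - x) by abel,
      inner_add_left, inner_neg_right, inner_neg_right, real_inner_self_eq_norm_sq,
      real_inner_smul_left, real_inner_comm]
    field_simp
    ring
  rw [inner_sub_left, norm_sub_rev (gradient f x)] at hyoung
  linarith
end

section
/- (Stationarity-measure bound at a proximal point.) Let E = ℝ^d with the Euclidean norm, let f : E → ℝ be differentiable with L-Lipschitz gradient, and let r : E → ℝ be convex. Let α > 0 and x, y ∈ E, and let x⁺ be a global minimizer over E of z ↦ r(z) + (1/(2α))‖z − (x − α y)‖². Then g := −y − (1/α)(x⁺ − x) is a subgradient of r at x⁺ (i.e., r(z) ≥ r(x⁺) + ⟨g, z − x⁺⟩ for all z ∈ E), and ‖∇f(x⁺) + g‖² ≤ 3·(L² + 1/α²)·‖x⁺ − x‖² + 3·‖∇f(x) − y‖². -/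
/-!
Minimality of `x⁺` against the points `x⁺ + t (z - x⁺)`, combined with convexity of `r` along
that segment, gives the subgradient inequality up to an error `O(t)`; letting `t → 0⁺` removes
it. The bound is then the decomposition
`∇f(x⁺) + g = (∇f(x⁺) - ∇f(x)) + (∇f(x) - y) - (1/α)(x⁺ - x)`
together with `‖a + b + c‖² ≤ 3(‖a‖² + ‖b‖² + ‖c‖²)`.
-/

open Set Filter Topology

open scoped RealInnerProductSpace

section

variable {F : Type*} [NormedAddCommGroup F] [InnerProductSpace ℝ F]

theorem ConvexOn.add_inner_le_of_add_inner_le_add_mul_sq {r : F → ℝ} (hr : ConvexOn ℝ univ r)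
    {g p : F} {c : ℝ} (h : ∀ z, r p + ⟪g, z - p⟫ ≤ r z + c * ‖z - p‖ ^ 2) (z : F) :
    r p + ⟪g, z - p⟫ ≤ r z := by
  set w := z - p
  have hsegment : ∀ t ∈ Ioc (0 : ℝ) 1, r p + ⟪g, w⟫ ≤ r z + c * t * ‖w‖ ^ 2 := by
    rintro t ⟨ht0, ht1⟩
    have hquad := h (p + t • w)
    have hconv : r (p + t • w) ≤ (1 - t) * r p + t * r z := by
      have hpt : (1 - t) • p + t • z = p + t • w := by module
      simpa only [hpt, smul_eq_mul] using
        hr.2 (mem_univ p) (mem_univ z) (sub_nonneg.2 ht1) ht0.le (sub_add_cancel 1 t)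
    rw [add_sub_cancel_left, real_inner_smul_right, norm_smul, Real.norm_of_nonneg ht0.le]
      at hquad
    have : t * (r p + ⟪g, w⟫) ≤ t * (r z + c * t * ‖w‖ ^ 2) := by linarith
    exact le_of_mul_le_mul_left this ht0
  have hlim : Tendsto (fun t : ℝ => r z + c * t * ‖w‖ ^ 2) (𝓝[>] 0) (𝓝 (r z)) := by
    have : Tendsto (fun t : ℝ => r z + c * t * ‖w‖ ^ 2) (𝓝 0) (𝓝 (r z + c * 0 * ‖w‖ ^ 2)) :=
      (continuous_const.add ((continuous_const.mul continuous_id).mul continuous_const)).tendsto 0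
    simpa using this.mono_left nhdsWithin_le_nhds
  exact ge_of_tendsto hlim (mem_of_superset (Ioc_mem_nhdsGT one_pos) hsegment)

theorem IsMinOn.add_inner_le_add_mul_norm_sub_sq {r : F → ℝ} {c : ℝ} {v p : F}
    (hp : IsMinOn (fun z => r z + c * ‖z - v‖ ^ 2) univ p) (z : F) :
    r p + ⟪(2 * c) • (v - p), z - p⟫ ≤ r z + c * ‖z - p‖ ^ 2 := by
  have hmin : r p + c * ‖p - v‖ ^ 2 ≤ r z + c * ‖z - v‖ ^ 2 := hp (mem_univ z)
  have hexpand : ‖z - v‖ ^ 2 = ‖z - p‖ ^ 2 - 2 * ⟪v - p, z - p⟫ + ‖p - v‖ ^ 2 := by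
    rw [← sub_add_sub_cancel z p v, norm_add_sq_real, ← neg_sub v p, inner_neg_right,
      real_inner_comm]
    ring
  rw [hexpand] at hmin
  rw [real_inner_smul_left]
  linarith

theorem ConvexOn.add_inner_le_of_isMinOn_add_mul_norm_sub_sq {r : F → ℝ}
    (hr : ConvexOn ℝ univ r) {c : ℝ} {v p : F}
    (hp : IsMinOn (fun z => r z + c * ‖z - v‖ ^ 2) univ p) (z : F) :
    r p + ⟪(2 * c) • (v - p), z - p⟫ ≤ r z :=
  hr.add_inner_le_of_add_inner_le_add_mul_sq hp.add_inner_le_add_mul_norm_sub_sq z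

end

theorem norm_add_add_sq_le {E : Type*} [SeminormedAddCommGroup E] (a b c : E) :
    ‖a + b + c‖ ^ 2 ≤ 3 * (‖a‖ ^ 2 + ‖b‖ ^ 2 + ‖c‖ ^ 2) := by
  have htri : ‖a + b + c‖ ≤ ‖a‖ + ‖b‖ + ‖c‖ := norm_add₃_le
  have hsq := pow_le_pow_left₀ (norm_nonneg _) htri 2
  nlinarith [sq_nonneg (‖a‖ - ‖b‖), sq_nonneg (‖b‖ - ‖c‖), sq_nonneg (‖a‖ - ‖c‖)]

theorem stmt13_general (d : ℕ) (f : EuclideanSpace ℝ (Fin d) → ℝ) (L : ℝ)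
    (hlip : ∀ a b : EuclideanSpace ℝ (Fin d), ‖gradient f a - gradient f b‖ ≤ L * ‖a - b‖)
    (r : EuclideanSpace ℝ (Fin d) → ℝ) (hr : ConvexOn ℝ Set.univ r)
    (α : ℝ) (hα : 0 < α)
    (x y xp : EuclideanSpace ℝ (Fin d))
    (hxp : IsMinOn (fun z => r z + (1 / (2 * α)) * ‖z - (x - α • y)‖ ^ 2) Set.univ xp) :
    (∀ z : EuclideanSpace ℝ (Fin d),
        r z ≥ r xp + inner ℝ (-y - (1 / α) • (xp - x)) (z - xp)) ∧
    ‖gradient f xp + (-y - (1 / α) • (xp - x))‖ ^ 2 ≤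
      3 * (L ^ 2 + 1 / α ^ 2) * ‖xp - x‖ ^ 2 + 3 * ‖gradient f x - y‖ ^ 2 := by
  have hg : -y - (1 / α) • (xp - x) = (2 * (1 / (2 * α))) • (x - α • y - xp) := by
    match_scalars <;> field_simp
  refine ⟨fun z => hg ▸ hr.add_inner_le_of_isMinOn_add_mul_norm_sub_sq hxp z, ?_⟩
  have hsplit : gradient f xp + (-y - (1 / α) • (xp - x))
      = (gradient f xp - gradient f x) + (gradient f x - y) + (-(1 / α)) • (xp - x) := by
    module
  have hgrad : ‖gradient f xp - gradient f x‖ ^ 2 ≤ L ^ 2 * ‖xp - x‖ ^ 2 := by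
    simpa only [mul_pow] using pow_le_pow_left₀ (norm_nonneg _) (hlip xp x) 2
  have hstep : ‖(-(1 / α)) • (xp - x)‖ ^ 2 = 1 / α ^ 2 * ‖xp - x‖ ^ 2 := by
    rw [norm_smul, mul_pow, Real.norm_eq_abs, sq_abs]
    ring
  calc _ ≤ 3 * (‖gradient f xp - gradient f x‖ ^ 2 + ‖gradient f x - y‖ ^ 2
          + ‖(-(1 / α)) • (xp - x)‖ ^ 2) := hsplit ▸ norm_add_add_sq_le _ _ _
    _ ≤ _ := by rw [hstep]; linarith

/-- Stationarity-measure bound at a proximal point: with `x⁺` a global minimizer of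
`z ↦ r z + (1/(2α))‖z − (x − α y)‖²`, the vector `g = −y − (1/α)(x⁺ − x)` is a
subgradient of `r` at `x⁺`, and
`‖∇f(x⁺) + g‖² ≤ 3(L² + 1/α²)‖x⁺ − x‖² + 3‖∇f(x) − y‖²`. -/
theorem stmt13 (d : ℕ) (f : EuclideanSpace ℝ (Fin d) → ℝ) (L : ℝ)
    (hdiff : Differentiable ℝ f)
    (hlip : ∀ a b : EuclideanSpace ℝ (Fin d), ‖gradient f a - gradient f b‖ ≤ L * ‖a - b‖)
    (r : EuclideanSpace ℝ (Fin d) → ℝ) (hr : ConvexOn ℝ Set.univ r)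
    (α : ℝ) (hα : 0 < α)
    (x y xp : EuclideanSpace ℝ (Fin d))
    (hxp : IsMinOn (fun z => r z + (1 / (2 * α)) * ‖z - (x - α • y)‖ ^ 2) Set.univ xp) :
    (∀ z : EuclideanSpace ℝ (Fin d),
        r z ≥ r xp + inner ℝ (-y - (1 / α) • (xp - x)) (z - xp)) ∧
    ‖gradient f xp + (-y - (1 / α) • (xp - x))‖ ^ 2 ≤
      3 * (L ^ 2 + 1 / α ^ 2) * ‖xp - x‖ ^ 2 + 3 * ‖gradient f x - y‖ ^ 2 :=
  stmt13_general d f L hlip r hr α hα x y xp hxp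
end

section
/- (Abstract linear-rate lemma.) Let c > 0, ν₀ ∈ ℕ, and let (L_ν) and (T_ν) be sequences of nonnegative reals such that for all ν ≥ ν₀: T_ν² ≤ L_ν − L_{ν+1} and L_{ν+1} ≤ c·T_ν². Then for all ν ≥ ν₀: L_ν ≤ L_{ν₀}·(c/(1+c))^{ν−ν₀} and T_ν ≤ √(L_{ν₀})·(c/(1+c))^{(ν−ν₀)/2}. -/
/-- Abstract linear-rate lemma: if `T ν² ≤ L ν − L (ν+1)` and `L (ν+1) ≤ c T ν²` for
`ν ≥ ν₀`, then `L ν ≤ L ν₀ (c/(1+c))^{ν−ν₀}` and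
`T ν ≤ √(L ν₀) (c/(1+c))^{(ν−ν₀)/2}` for all `ν ≥ ν₀`. -/
theorem stmt14 (c : ℝ) (hc : 0 < c) (ν₀ : ℕ) (Ls T : ℕ → ℝ)
    (hLnn : ∀ ν, 0 ≤ Ls ν) (hTnn : ∀ ν, 0 ≤ T ν)
    (h1 : ∀ ν ≥ ν₀, (T ν) ^ 2 ≤ Ls ν - Ls (ν + 1))
    (h2 : ∀ ν ≥ ν₀, Ls (ν + 1) ≤ c * (T ν) ^ 2) :
    ∀ ν ≥ ν₀, Ls ν ≤ Ls ν₀ * (c / (1 + c)) ^ (ν - ν₀) ∧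
      T ν ≤ Real.sqrt (Ls ν₀) * (c / (1 + c)) ^ (((ν : ℝ) - (ν₀ : ℝ)) / 2) := by
  have hc1 : (0:ℝ) < 1 + c := by linarith
  set q : ℝ := c / (1 + c) with hqdef
  have hq0 : 0 ≤ q := by positivity
  have key : ∀ ν ≥ ν₀, Ls ν ≤ Ls ν₀ * q ^ (ν - ν₀) := by
    intro ν hν
    induction ν, hν using Nat.le_induction with
    | base => simp
    | succ ν hν ih =>
      have step : Ls (ν + 1) ≤ q * Ls ν := by
        have hA := h1 ν hν
        have hB := h2 ν hν
        rw [hqdef, div_mul_eq_mul_div, le_div_iff₀ hc1]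
        nlinarith
      have : Ls (ν + 1) ≤ q * (Ls ν₀ * q ^ (ν - ν₀)) :=
        le_trans step (by nlinarith [hLnn ν])
      calc Ls (ν + 1) ≤ q * (Ls ν₀ * q ^ (ν - ν₀)) := this
        _ = Ls ν₀ * q ^ (ν + 1 - ν₀) := by
            rw [Nat.succ_sub hν, pow_succ]; ring
  intro ν hν
  refine ⟨key ν hν, ?_⟩
  have hT2 : (T ν) ^ 2 ≤ Ls ν₀ * q ^ (ν - ν₀) := by
    have hA := h1 ν hν
    have := hLnn (ν + 1)
    have := key ν hν
    linarith
  have hcast : ((ν : ℝ) - (ν₀ : ℝ)) = ((ν - ν₀ : ℕ) : ℝ) := by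
    rw [Nat.cast_sub hν]
  have hrpow : q ^ (((ν : ℝ) - (ν₀ : ℝ)) / 2) = Real.sqrt (q ^ (ν - ν₀)) := by
    rw [hcast, Real.sqrt_eq_rpow, div_eq_mul_inv, Real.rpow_mul hq0,
      Real.rpow_natCast]
    norm_num
  rw [hrpow, ← Real.sqrt_mul (hLnn ν₀)]
  calc T ν = Real.sqrt ((T ν) ^ 2) := by
        rw [Real.sqrt_sq (hTnn ν)]
    _ ≤ Real.sqrt (Ls ν₀ * q ^ (ν - ν₀)) := Real.sqrt_le_sqrt hT2
end

section
/- (Gradient-tracking error bound.) Let m, d ≥ 1, and for i = 1,…,m let f_i : ℝ^d → ℝ be differentiable with L_i-Lipschitz gradient; set L_mx := max_i L_i and f := (1/m)∑_{i=1}^m f_i. Let x_1,…,x_m and y_1,…,y_m be points of ℝ^d satisfying the tracking invariant (1/m)∑_{i=1}^m y_i = (1/m)∑_{i=1}^m ∇f_i(x_i), and set x̄ := (1/m)∑_i x_i and ȳ := (1/m)∑_i y_i. Then ∑_{i=1}^m ‖∇f(x_i) − y_i‖² ≤ 2·∑_{i=1}^m ‖y_i − ȳ‖² + 4·L_mx²·∑_{i=1}^m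 ‖x_i − x̄‖². -/
/-!
Write `∇f(xᵢ) − yᵢ = (∇f(xᵢ) − ȳ) + (ȳ − yᵢ)` and use `‖a + b‖² ≤ 2‖a‖² + 2‖b‖²`.
The tracking invariant makes `∇f(xᵢ) − ȳ` the average over `j` of `∇fⱼ(xᵢ) − ∇fⱼ(xⱼ)`, so
by Cauchy–Schwarz and the Lipschitz bounds `‖∇f(xᵢ) − ȳ‖² ≤ L_mx² · (1/m) ∑ⱼ ‖xᵢ − xⱼ‖²`.
Summing over `i`, the pairwise sum `∑ᵢ ∑ⱼ ‖xᵢ − xⱼ‖²` equals `2m ∑ᵢ ‖xᵢ − x̄‖²`.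
-/

open Finset
open scoped RealInnerProductSpace

lemma norm_sub_sq_le_two_mul_add {E : Type*} [SeminormedAddCommGroup E] (a b c : E) :
    ‖a - c‖ ^ 2 ≤ 2 * ‖a - b‖ ^ 2 + 2 * ‖b - c‖ ^ 2 :=
  calc ‖a - c‖ ^ 2 ≤ (‖a - b‖ + ‖b - c‖) ^ 2 := by
        gcongr; exact norm_sub_le_norm_sub_add_norm_sub a b c
    _ ≤ 2 * ‖a - b‖ ^ 2 + 2 * ‖b - c‖ ^ 2 := by linarith [add_sq_le (a := ‖a - b‖) (b := ‖b - c‖)]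

lemma norm_sum_sq_le_card_mul_sum_norm_sq {ι E : Type*} [SeminormedAddCommGroup E]
    (s : Finset ι) (v : ι → E) : ‖∑ i ∈ s, v i‖ ^ 2 ≤ #s * ∑ i ∈ s, ‖v i‖ ^ 2 :=
  calc ‖∑ i ∈ s, v i‖ ^ 2 ≤ (∑ i ∈ s, ‖v i‖) ^ 2 := by gcongr; exact norm_sum_le s v
    _ ≤ #s * ∑ i ∈ s, ‖v i‖ ^ 2 := sq_sum_le_card_mul_sum_sq

section PairwiseSum

variable {ι F : Type*} [Fintype ι] [NormedAddCommGroup F] [InnerProductSpace ℝ F]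

lemma sum_sum_norm_sub_sq_of_sum_eq_zero (u : ι → F) (h : ∑ i, u i = 0) :
    ∑ i, ∑ j, ‖u i - u j‖ ^ 2 = 2 * Fintype.card ι * ∑ i, ‖u i‖ ^ 2 := by
  have hrow : ∀ i, ∑ j, ‖u i - u j‖ ^ 2
      = Fintype.card ι * ‖u i‖ ^ 2 - 2 * ⟪u i, ∑ j, u j⟫ + ∑ j, ‖u j‖ ^ 2 := by
    intro i
    simp only [norm_sub_sq_real, sum_add_distrib, sum_sub_distrib, inner_sum, ← mul_sum,
      sum_const, card_univ, nsmul_eq_mul]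
  simp only [hrow, h, inner_zero_right, mul_zero, sub_zero, sum_add_distrib, ← mul_sum,
    sum_const, card_univ, nsmul_eq_mul]
  ring

lemma sum_sum_norm_sub_sq_eq_two_card_mul_sum_norm_sub_mean_sq (u : ι → F) :
    ∑ i, ∑ j, ‖u i - u j‖ ^ 2
      = 2 * Fintype.card ι * ∑ i, ‖u i - (Fintype.card ι : ℝ)⁻¹ • ∑ j, u j‖ ^ 2 := by
  set ubar := (Fintype.card ι : ℝ)⁻¹ • ∑ j, u j
  rcases isEmpty_or_nonempty ι with hι | hι
  · simp
  have hcentered : ∑ i, (u i - ubar) = 0 := by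
    rw [sum_sub_distrib, sum_const, card_univ, ← Nat.cast_smul_eq_nsmul ℝ, smul_smul,
      mul_inv_cancel₀ (by positivity), one_smul, sub_self]
  simpa using sum_sum_norm_sub_sq_of_sum_eq_zero (fun i => u i - ubar) hcentered

end PairwiseSum

lemma gradient_sum_div {ι E : Type*} [Fintype ι] [NormedAddCommGroup E] [InnerProductSpace ℝ E]
    [CompleteSpace E] (f : ι → E → ℝ) (hdiff : ∀ i, Differentiable ℝ (f i)) (c : ℝ) (a : E) :
    gradient (fun z => (∑ j, f j z) / c) a = c⁻¹ • ∑ j, gradient (f j) a := by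
  have hderiv : HasFDerivAt (fun z => (∑ j, f j z) / c) (c⁻¹ • ∑ j, fderiv ℝ (f j) a) a := by
    simpa [div_eq_inv_mul] using
      (HasFDerivAt.sum fun j _ => (hdiff j a).hasFDerivAt).const_mul c⁻¹
  rw [(hasFDerivAt_iff_hasGradientAt.mp hderiv).gradient, map_smul, map_sum]
  rfl

lemma norm_smul_sum_sub_sq_le_of_lipschitz {ι E F : Type*} [Fintype ι]
    [SeminormedAddCommGroup E] [SeminormedAddCommGroup F] [NormedSpace ℝ F]
    (g : ι → E → F) (L : ℝ) (hg : ∀ j a b, ‖g j a - g j b‖ ≤ L * ‖a - b‖) (a : E) (x : ι → E) :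
    ‖(Fintype.card ι : ℝ)⁻¹ • ∑ j, (g j a - g j (x j))‖ ^ 2
      ≤ L ^ 2 * (Fintype.card ι : ℝ)⁻¹ * ∑ j, ‖a - x j‖ ^ 2 := by
  set n : ℝ := (Fintype.card ι : ℝ)
  have hn : n⁻¹ ^ 2 * n = n⁻¹ := by
    rcases eq_or_ne n 0 with h | h
    · simp [h]
    · field_simp
  have hterm : ∀ j, ‖g j a - g j (x j)‖ ^ 2 ≤ L ^ 2 * ‖a - x j‖ ^ 2 := fun j => by
    rw [← mul_pow]; gcongr; exact hg j a (x j)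
  calc ‖n⁻¹ • ∑ j, (g j a - g j (x j))‖ ^ 2
      = n⁻¹ ^ 2 * ‖∑ j, (g j a - g j (x j))‖ ^ 2 := by
        rw [norm_smul, mul_pow, Real.norm_eq_abs, sq_abs]
    _ ≤ n⁻¹ ^ 2 * (n * ∑ j, ‖g j a - g j (x j)‖ ^ 2) := by
        gcongr; simpa using norm_sum_sq_le_card_mul_sum_norm_sq univ fun j => g j a - g j (x j)
    _ ≤ n⁻¹ ^ 2 * (n * ∑ j, L ^ 2 * ‖a - x j‖ ^ 2) := by gcongr with j; exact hterm j
    _ = L ^ 2 * n⁻¹ * ∑ j, ‖a - x j‖ ^ 2 := by rw [← mul_sum, ← mul_assoc, hn]; ring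

theorem stmt15_general (m d : ℕ) (hm : 1 ≤ m)
    (f : Fin m → EuclideanSpace ℝ (Fin d) → ℝ) (Lf : Fin m → ℝ)
    (hdiff : ∀ i, Differentiable ℝ (f i))
    (hlip : ∀ i, ∀ a b : EuclideanSpace ℝ (Fin d),
      ‖gradient (f i) a - gradient (f i) b‖ ≤ Lf i * ‖a - b‖)
    (Lmx : ℝ) (hLmx : Lmx = Finset.univ.sup' ⟨⟨0, hm⟩, Finset.mem_univ _⟩ Lf)
    (x y : Fin m → EuclideanSpace ℝ (Fin d))
    (htrack : (m : ℝ)⁻¹ • ∑ i, y i = (m : ℝ)⁻¹ • ∑ i, gradient (f i) (x i)) :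
    ∑ i, ‖gradient (fun z => (∑ j, f j z) / m) (x i) - y i‖ ^ 2 ≤
      2 * ∑ i, ‖y i - (m : ℝ)⁻¹ • ∑ j, y j‖ ^ 2 +
      4 * Lmx ^ 2 * ∑ i, ‖x i - (m : ℝ)⁻¹ • ∑ j, x j‖ ^ 2 := by
  set ybar := (m : ℝ)⁻¹ • ∑ j, y j
  set F := fun z => (∑ j, f j z) / m
  have hlipmx : ∀ j a b, ‖gradient (f j) a - gradient (f j) b‖ ≤ Lmx * ‖a - b‖ := fun j a b =>
    (hlip j a b).trans (by gcongr; rw [hLmx]; exact le_sup' Lf (mem_univ j))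
  have hgap : ∀ i, ‖gradient F (x i) - ybar‖ ^ 2 ≤ Lmx ^ 2 * (m : ℝ)⁻¹ * ∑ j, ‖x i - x j‖ ^ 2 := by
    intro i
    rw [gradient_sum_div f hdiff, htrack, ← smul_sub, ← sum_sub_distrib]
    simpa using norm_smul_sum_sub_sq_le_of_lipschitz (fun j => gradient (f j)) Lmx hlipmx (x i) x
  calc ∑ i, ‖gradient F (x i) - y i‖ ^ 2
      ≤ ∑ i, (2 * ‖gradient F (x i) - ybar‖ ^ 2 + 2 * ‖ybar - y i‖ ^ 2) :=
        sum_le_sum fun i _ => norm_sub_sq_le_two_mul_add _ _ _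
    _ ≤ ∑ i, (2 * (Lmx ^ 2 * (m : ℝ)⁻¹ * ∑ j, ‖x i - x j‖ ^ 2) + 2 * ‖y i - ybar‖ ^ 2) := by
        gcongr with i
        · exact hgap i
        · rw [norm_sub_rev]
    _ = 2 * ∑ i, ‖y i - ybar‖ ^ 2 + 2 * Lmx ^ 2 * (m : ℝ)⁻¹ * ∑ i, ∑ j, ‖x i - x j‖ ^ 2 := by
        rw [sum_add_distrib, ← mul_sum, ← mul_sum, ← mul_sum]; ring
    _ = 2 * ∑ i, ‖y i - ybar‖ ^ 2 + 4 * Lmx ^ 2 * ∑ i, ‖x i - (m : ℝ)⁻¹ • ∑ j, x j‖ ^ 2 := by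
        have hm0 : (m : ℝ) ≠ 0 := by positivity
        simp only [sum_sum_norm_sub_sq_eq_two_card_mul_sum_norm_sub_mean_sq x, Fintype.card_fin]
        field_simp
        ring

/-- Gradient-tracking error bound: under the tracking invariant
`(1/m)∑ y i = (1/m)∑ ∇f_i(x i)`, one has
`∑ ‖∇f(x i) − y i‖² ≤ 2 ∑ ‖y i − ȳ‖² + 4 L_mx² ∑ ‖x i − x̄‖²`. -/
theorem stmt15 (m d : ℕ) (hm : 1 ≤ m) (hd : 1 ≤ d)
    (f : Fin m → EuclideanSpace ℝ (Fin d) → ℝ) (Lf : Fin m → ℝ)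
    (hdiff : ∀ i, Differentiable ℝ (f i))
    (hlip : ∀ i, ∀ a b : EuclideanSpace ℝ (Fin d),
      ‖gradient (f i) a - gradient (f i) b‖ ≤ Lf i * ‖a - b‖)
    (Lmx : ℝ) (hLmx : Lmx = Finset.univ.sup' ⟨⟨0, hm⟩, Finset.mem_univ _⟩ Lf)
    (x y : Fin m → EuclideanSpace ℝ (Fin d))
    (htrack : (m : ℝ)⁻¹ • ∑ i, y i = (m : ℝ)⁻¹ • ∑ i, gradient (f i) (x i)) :
    ∑ i, ‖gradient (fun z => (∑ j, f j z) / m) (x i) - y i‖ ^ 2 ≤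
      2 * ∑ i, ‖y i - (m : ℝ)⁻¹ • ∑ j, y j‖ ^ 2 +
      4 * Lmx ^ 2 * ∑ i, ‖x i - (m : ℝ)⁻¹ • ∑ j, x j‖ ^ 2 :=
  stmt15_general m d hm f Lf hdiff hlip Lmx hLmx x y htrack
end

section
/- (One-step tracking consensus recursion.) Let m, d ≥ 1; for j = 1,…,m let f_j : ℝ^d → ℝ be differentiable with L_j-Lipschitz gradient and set L_mx := max_j L_j. Let W = (w_ij) be an m×m doubly stochastic matrix with nonnegative entries, and set ρ := ‖W − (1/m)𝟙𝟙ᵀ‖₂ (ℓ₂ operator norm). Let x_1,…,x_m, x_1^{1/2},…,x_m^{1/2}, y_1,…,y_m ∈ ℝ^d, and define x_i⁺ := ∑_{j=1}^m w_ij x_j^{1/2} and y_i⁺ := ∑_{j=1}^m w_ij ( y_j + ∇f_j(x_j⁺) − ∇f_j(x_j) ). With x̄ := (1/m)∑_i x_i, ȳ := (1/m)∑_i y_i, ȳ⁺ := (1/m)∑_i y_i⁺, it holds that (∑_{i=1}^m ‖y_i⁺ − ȳ⁺‖²)^{1/2} ≤ ρ·(∑_{i=1}^m ‖y_i − ȳ‖²)^{1/2}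 + 2·ρ·L_mx·(∑_{i=1}^m ‖x_i − x̄‖²)^{1/2} + ρ·L_mx·(∑_{i=1}^m ‖x_i^{1/2} − x_i‖²)^{1/2}. -/
/-!
With `Δ_j := ∇f_j(x_j⁺) - ∇f_j(x_j)`, column stochasticity of `W` makes the mean of `y⁺` equal to
the mean of `y + Δ`, so `y⁺ - ȳ⁺ = (W - 𝟙𝟙ᵀ/m)(y + Δ)`, and since `W - 𝟙𝟙ᵀ/m` has zero row sums
this is `(W - 𝟙𝟙ᵀ/m)(y - ȳ) + (W - 𝟙𝟙ᵀ/m) Δ`. Applied blockwise to `(ℝ^d)^m` (i.e. to each of the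
`d` coordinate vectors in `ℝ^m`) the matrix still has norm at most `ρ`. Finally
`‖Δ‖ ≤ L_mx ‖x⁺ - x‖` and `x⁺ - x = W(x^{1/2} - x) + W(x - x̄) - (x - x̄)`, where the doubly
stochastic `W` does not increase the stacked norm (Jensen in each row, then the column sums).
-/

open Finset Matrix WithLp

section
variable {ι κ : Type*} [Fintype ι]

theorem norm_toLp_eq_sqrt {E : Type*} [SeminormedAddCommGroup E] (u : ι → E) :
    ‖toLp 2 u‖ = √(∑ i, ‖u i‖ ^ 2) :=
  PiLp.norm_eq_of_L2 _

theorem norm_toLp_sq_eq_sum_norm_toLp_coord_sq [Fintype κ] (v : ι → EuclideanSpace ℝ κ) :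
    ‖toLp 2 v‖ ^ 2 = ∑ k, ‖toLp 2 fun i => v i k‖ ^ 2 := by
  simp only [PiLp.norm_sq_eq_of_L2]
  exact sum_comm

theorem toEuclideanCLM_toLp_coord [DecidableEq ι] (A : Matrix ι ι ℝ) (u : ι → EuclideanSpace ℝ κ)
    (k : κ) :
    toEuclideanCLM (𝕜 := ℝ) A (toLp 2 fun j => u j k) = toLp 2 fun i => (∑ j, A i j • u j) k := by
  ext i
  simp [mulVec, dotProduct]

theorem norm_toLp_sum_smul_le_opNorm_mul [DecidableEq ι] [Fintype κ] (A : Matrix ι ι ℝ)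
    (u : ι → EuclideanSpace ℝ κ) :
    ‖toLp 2 fun i => ∑ j, A i j • u j‖ ≤ ‖toEuclideanCLM (𝕜 := ℝ) A‖ * ‖toLp 2 u‖ := by
  refine le_of_pow_le_pow_left₀ two_ne_zero (by positivity) ?_
  rw [norm_toLp_sq_eq_sum_norm_toLp_coord_sq, mul_pow, norm_toLp_sq_eq_sum_norm_toLp_coord_sq,
    mul_sum]
  gcongr with k
  rw [← toEuclideanCLM_toLp_coord, ← mul_pow]
  exact pow_le_pow_left₀ (norm_nonneg _) (ContinuousLinearMap.le_opNorm _ _) 2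

variable {E : Type*} [SeminormedAddCommGroup E]

theorem norm_toLp_le_mul_of_forall_norm_le {u v : ι → E} {L : ℝ} (hL : 0 ≤ L)
    (h : ∀ i, ‖u i‖ ≤ L * ‖v i‖) : ‖toLp 2 u‖ ≤ L * ‖toLp 2 v‖ := by
  refine le_of_pow_le_pow_left₀ two_ne_zero (by positivity) ?_
  simp only [mul_pow, PiLp.norm_sq_eq_of_L2, mul_sum]
  gcongr with i
  rw [← mul_pow]
  exact pow_le_pow_left₀ (norm_nonneg _) (h i) 2

variable [NormedSpace ℝ E]

theorem norm_sum_smul_sq_le_of_sum_eq_one {w : ι → ℝ} (hw : ∀ j, 0 ≤ w j) (hsum : ∑ j, w j = 1)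
    (u : ι → E) : ‖∑ j, w j • u j‖ ^ 2 ≤ ∑ j, w j * ‖u j‖ ^ 2 := by
  have hnorm : ‖∑ j, w j • u j‖ ≤ ∑ j, w j * ‖u j‖ :=
    (norm_sum_le _ _).trans_eq <| by simp only [norm_smul, Real.norm_of_nonneg (hw _)]
  calc ‖∑ j, w j • u j‖ ^ 2 ≤ (∑ j, w j * ‖u j‖) ^ 2 := by gcongr
    _ ≤ (∑ j, w j) * ∑ j, w j * ‖u j‖ ^ 2 :=
        sum_sq_le_sum_mul_sum_of_sq_le_mul _ (fun j _ => hw j)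
          (fun j _ => mul_nonneg (hw j) (sq_nonneg _))
          (fun j _ => by rw [mul_pow, ← mul_assoc, sq])
    _ = ∑ j, w j * ‖u j‖ ^ 2 := by rw [hsum, one_mul]

theorem norm_toLp_sum_smul_le_of_mem_doublyStochastic [DecidableEq ι] {W : Matrix ι ι ℝ}
    (hW : W ∈ doublyStochastic ℝ ι) (u : ι → E) :
    ‖toLp 2 fun i => ∑ j, W i j • u j‖ ≤ ‖toLp 2 u‖ := by
  refine le_of_pow_le_pow_left₀ two_ne_zero (norm_nonneg _) ?_
  simp only [PiLp.norm_sq_eq_of_L2]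
  calc ∑ i, ‖∑ j, W i j • u j‖ ^ 2 ≤ ∑ i, ∑ j, W i j * ‖u j‖ ^ 2 :=
        sum_le_sum fun i _ => norm_sum_smul_sq_le_of_sum_eq_one
          (fun _ => nonneg_of_mem_doublyStochastic hW) (sum_row_of_mem_doublyStochastic hW i) u
    _ = ∑ j, ‖u j‖ ^ 2 := by
        rw [sum_comm]
        simp only [← sum_mul, sum_col_of_mem_doublyStochastic hW, one_mul]

theorem norm_toLp_sum_smul_sub_le [DecidableEq ι] {W : Matrix ι ι ℝ}
    (hW : W ∈ doublyStochastic ℝ ι) (z x : ι → E) (a : E) :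
    ‖toLp 2 fun i => ∑ j, W i j • z j - x i‖ ≤
      ‖toLp 2 fun i => z i - x i‖ + 2 * ‖toLp 2 fun i => x i - a‖ := by
  have hsplit : (toLp 2 fun i => ∑ j, W i j • z j - x i) =
      (toLp 2 fun i => ∑ j, W i j • (z j - x j)) +
        ((toLp 2 fun i => ∑ j, W i j • (x j - a)) - toLp 2 fun i => x i - a) := by
    ext i
    simp only [PiLp.add_apply, PiLp.sub_apply, smul_sub, sum_sub_distrib, ← sum_smul,
      sum_row_of_mem_doublyStochastic hW i, one_smul]
    abel
  rw [hsplit]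
  have hz := norm_toLp_sum_smul_le_of_mem_doublyStochastic hW fun j => z j - x j
  have hx := norm_toLp_sum_smul_le_of_mem_doublyStochastic hW fun j => x j - a
  linarith [norm_add_le (toLp 2 fun i => ∑ j, W i j • (z j - x j))
    ((toLp 2 fun i => ∑ j, W i j • (x j - a)) - toLp 2 fun i => x i - a),
    norm_sub_le (toLp 2 fun i => ∑ j, W i j • (x j - a)) (toLp 2 fun i => x i - a)]

theorem sum_smul_sub_smul_sum_eq_sum_sub_smul {W : Matrix ι ι ℝ} (hcol : ∀ j, ∑ i, W i j = 1)
    (c : ℝ) (v : ι → E) (i : ι) :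
    ∑ j, W i j • v j - c • ∑ i', ∑ j, W i' j • v j = ∑ j, (W i j - c) • v j := by
  rw [sum_comm]
  simp only [← sum_smul, hcol, one_smul, sub_smul, sum_sub_distrib, smul_sum]

theorem sum_smul_add_eq_sum_smul_sub_add {a : ι → ℝ} (ha : ∑ j, a j = 0) (y Δ : ι → E) (c : E) :
    ∑ j, a j • (y j + Δ j) = ∑ j, a j • (y j - c) + ∑ j, a j • Δ j := by
  simp only [smul_add, smul_sub, sum_add_distrib, sum_sub_distrib, ← sum_smul, ha, zero_smul,
    sub_zero]

theorem norm_toLp_sum_smul_sub_smul_sum_le [DecidableEq ι] [Fintype κ] {W : Matrix ι ι ℝ}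
    (hcol : ∀ j, ∑ i, W i j = 1) {c : ℝ}
    (hrow : ∀ i, ∑ j, (W i j - c) = 0) (y Δ : ι → EuclideanSpace ℝ κ) :
    ‖toLp 2 fun i => ∑ j, W i j • (y j + Δ j) - c • ∑ i', ∑ j, W i' j • (y j + Δ j)‖ ≤
      ‖toEuclideanCLM (𝕜 := ℝ) (W - c • of fun _ _ => (1 : ℝ) : Matrix ι ι ℝ)‖ *
        (‖toLp 2 fun i => y i - c • ∑ j, y j‖ + ‖toLp 2 Δ‖) := by
  set A := W - c • of fun _ _ => (1 : ℝ)
  have hdev : ∀ i, ∑ j, W i j • (y j + Δ j) - c • ∑ i', ∑ j, W i' j • (y j + Δ j) =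
      ∑ j, A i j • (y j - c • ∑ j, y j) + ∑ j, A i j • Δ j := fun i => by
    rw [sum_smul_sub_smul_sum_eq_sum_sub_smul hcol,
      sum_smul_add_eq_sum_smul_sub_add (hrow i) y Δ (c • ∑ j, y j)]
    simp [A]
  simp only [hdev, mul_add]
  exact (norm_add_le (toLp 2 _) (toLp 2 _)).trans
    (add_le_add (norm_toLp_sum_smul_le_opNorm_mul A _) (norm_toLp_sum_smul_le_opNorm_mul A _))

end

theorem nonneg_of_norm_sub_le_mul_norm_sub {E F : Type*} [NormedAddCommGroup E] [Nontrivial E]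
    [SeminormedAddCommGroup F] {g : E → F} {L : ℝ} (h : ∀ a b, ‖g a - g b‖ ≤ L * ‖a - b‖) :
    0 ≤ L := by
  obtain ⟨a, ha⟩ := exists_ne (0 : E)
  exact nonneg_of_mul_nonneg_left ((norm_nonneg _).trans (by simpa using h a 0))
    (norm_pos_iff.2 ha)

theorem stmt17_general (m d : ℕ) (hm : 1 ≤ m) (hd : 1 ≤ d)
    (f : Fin m → EuclideanSpace ℝ (Fin d) → ℝ) (Lf : Fin m → ℝ)
    (hlip : ∀ j, ∀ a b : EuclideanSpace ℝ (Fin d),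
      ‖gradient (f j) a - gradient (f j) b‖ ≤ Lf j * ‖a - b‖)
    (Lmx : ℝ) (hLmx : Lmx = Finset.univ.sup' ⟨⟨0, hm⟩, Finset.mem_univ _⟩ Lf)
    (W : Matrix (Fin m) (Fin m) ℝ)
    (hWnn : ∀ i j, 0 ≤ W i j)
    (hWrow : ∀ i, ∑ j, W i j = 1) (hWcol : ∀ j, ∑ i, W i j = 1)
    (ρ : ℝ)
    (hρ : ρ = ‖Matrix.toEuclideanCLM (𝕜 := ℝ) (n := Fin m)
      (W - (m : ℝ)⁻¹ • Matrix.of fun _ _ => (1 : ℝ))‖)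
    (x xh y xp yp : Fin m → EuclideanSpace ℝ (Fin d))
    (hxp : ∀ i, xp i = ∑ j, W i j • xh j)
    (hyp : ∀ i, yp i = ∑ j, W i j •
      (y j + gradient (f j) (xp j) - gradient (f j) (x j))) :
    Real.sqrt (∑ i, ‖yp i - (m : ℝ)⁻¹ • ∑ j, yp j‖ ^ 2) ≤
      ρ * Real.sqrt (∑ i, ‖y i - (m : ℝ)⁻¹ • ∑ j, y j‖ ^ 2)
      + 2 * ρ * Lmx * Real.sqrt (∑ i, ‖x i - (m : ℝ)⁻¹ • ∑ j, x j‖ ^ 2)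
      + ρ * Lmx * Real.sqrt (∑ i, ‖xh i - x i‖ ^ 2) := by
  have hW : W ∈ doublyStochastic ℝ (Fin m) :=
    mem_doublyStochastic_iff_sum.2 ⟨hWnn, hWrow, hWcol⟩
  have hρ0 : 0 ≤ ρ := hρ ▸ norm_nonneg _
  have hLf : ∀ j, Lf j ≤ Lmx := fun j => hLmx ▸ le_sup' Lf (mem_univ j)
  have : Nonempty (Fin d) := ⟨⟨0, hd⟩⟩
  have hLmx0 : 0 ≤ Lmx := (nonneg_of_norm_sub_le_mul_norm_sub (hlip ⟨0, hm⟩)).trans (hLf _)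
  set Δ := fun j => gradient (f j) (xp j) - gradient (f j) (x j)
  have hΔ : ‖toLp 2 Δ‖ ≤ Lmx * ‖toLp 2 fun i => xp i - x i‖ :=
    norm_toLp_le_mul_of_forall_norm_le hLmx0 fun j =>
      (hlip j _ _).trans (mul_le_mul_of_nonneg_right (hLf j) (norm_nonneg _))
  have hxpx := norm_toLp_sum_smul_sub_le hW xh x ((m : ℝ)⁻¹ • ∑ j, x j)
  simp only [← hxp] at hxpx
  have hrow : ∀ i, ∑ j, (W i j - (m : ℝ)⁻¹) = 0 := fun i => by
    simp [hWrow, mul_inv_cancel₀ (show (m : ℝ) ≠ 0 by positivity)]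
  have hyp' : ∀ i, yp i = ∑ j, W i j • (y j + Δ j) := fun i => by
    simp only [hyp, add_sub_assoc, Δ]
  have hcons := norm_toLp_sum_smul_sub_smul_sum_le hWcol hrow y Δ
  simp only [← hyp', ← hρ] at hcons
  simp only [← norm_toLp_eq_sqrt]
  calc _ ≤ ρ * (‖toLp 2 fun i => y i - (m : ℝ)⁻¹ • ∑ j, y j‖ + ‖toLp 2 Δ‖) := hcons
    _ ≤ ρ * (‖toLp 2 fun i => y i - (m : ℝ)⁻¹ • ∑ j, y j‖ + Lmx *
          (‖toLp 2 fun i => xh i - x i‖ + 2 * ‖toLp 2 fun i => x i - (m : ℝ)⁻¹ • ∑ j, x j‖)) := by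
        gcongr
        exact hΔ.trans (by gcongr)
    _ = _ := by ring

/-- One-step tracking consensus recursion: with `x_i⁺ = ∑_j w_ij x_j^{1/2}` and
`y_i⁺ = ∑_j w_ij (y_j + ∇f_j(x_j⁺) − ∇f_j(x_j))`, the tracking consensus error
contracts: `‖Y⁺_⊥‖ ≤ ρ ‖Y_⊥‖ + 2 ρ L_mx ‖X_⊥‖ + ρ L_mx ‖D‖`. -/
theorem stmt17 (m d : ℕ) (hm : 1 ≤ m) (hd : 1 ≤ d)
    (f : Fin m → EuclideanSpace ℝ (Fin d) → ℝ) (Lf : Fin m → ℝ)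
    (hdiff : ∀ j, Differentiable ℝ (f j))
    (hlip : ∀ j, ∀ a b : EuclideanSpace ℝ (Fin d),
      ‖gradient (f j) a - gradient (f j) b‖ ≤ Lf j * ‖a - b‖)
    (Lmx : ℝ) (hLmx : Lmx = Finset.univ.sup' ⟨⟨0, hm⟩, Finset.mem_univ _⟩ Lf)
    (W : Matrix (Fin m) (Fin m) ℝ)
    (hWnn : ∀ i j, 0 ≤ W i j)
    (hWrow : ∀ i, ∑ j, W i j = 1) (hWcol : ∀ j, ∑ i, W i j = 1)
    (ρ : ℝ)
    (hρ : ρ = ‖Matrix.toEuclideanCLM (𝕜 := ℝ) (n := Fin m)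
      (W - (m : ℝ)⁻¹ • Matrix.of fun _ _ => (1 : ℝ))‖)
    (x xh y xp yp : Fin m → EuclideanSpace ℝ (Fin d))
    (hxp : ∀ i, xp i = ∑ j, W i j • xh j)
    (hyp : ∀ i, yp i = ∑ j, W i j •
      (y j + gradient (f j) (xp j) - gradient (f j) (x j))) :
    Real.sqrt (∑ i, ‖yp i - (m : ℝ)⁻¹ • ∑ j, yp j‖ ^ 2) ≤
      ρ * Real.sqrt (∑ i, ‖y i - (m : ℝ)⁻¹ • ∑ j, y j‖ ^ 2)
      + 2 * ρ * Lmx * Real.sqrt (∑ i, ‖x i - (m : ℝ)⁻¹ • ∑ j, x j‖ ^ 2)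
      + ρ * Lmx * Real.sqrt (∑ i, ‖xh i - x i‖ ^ 2) :=
  stmt17_general m d hm hd f Lf hlip Lmx hLmx W hWnn hWrow hWcol ρ hρ x xh y xp yp hxp hyp
end
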